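/- Let ⊙ be a non-degenerate pseudo-multiplication on [0,∞]. A σ-maxitive measure τ on a σ-algebra 𝓑 satisfies the Radon–Nikodym property with respect to the idempotent ⊙-integral if and only if τ is σ-⊙-finite and σ-principal. -/

import Mathlib

open scoped ENNReal
open Set Filter MeasureTheory

variable {E : Type*}

/-- `f : E → [0,∞]` is `𝓑`-measurable: `{f > t}` is measurable for every `t`. -/
def Premeasurable [MeasurableSpace E] (f : E → ℝ≥0∞) : Prop :=
  ∀ t : ℝ≥0∞, MeasurableSet {x | t < f x}

/-- A maxitive measure on the σ-algebra of measurable subsets of `E`. -/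
def Maxitive [MeasurableSpace E] (ν : Set E → ℝ≥0∞) : Prop :=
  ν ∅ = 0 ∧ ∀ A B : Set E, MeasurableSet A → MeasurableSet B →
    ν (A ∪ B) = max (ν A) (ν B)

/-- A σ-maxitive measure: a maxitive measure commuting with countable nondecreasing unions. -/
def SigmaMaxitive [MeasurableSpace E] (ν : Set E → ℝ≥0∞) : Prop :=
  Maxitive ν ∧ ∀ B : ℕ → Set E, (∀ n, MeasurableSet (B n)) → Monotone B →
    ν (⋃ n, B n) = ⨆ n, ν (B n)

/-- `N` is `τ`-negligible: it is contained in a measurable set of `τ`-measure zero. -/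
def Negligible [MeasurableSpace E] (τ : Set E → ℝ≥0∞) (N : Set E) : Prop :=
  ∃ B : Set E, MeasurableSet B ∧ N ⊆ B ∧ τ B = 0

/-- The `τ`-essential supremum of `f` over `B`: `inf { t > 0 : B ∩ {f > t} is τ-negligible }`. -/
noncomputable def essSupOn [MeasurableSpace E] (τ : Set E → ℝ≥0∞) (f : E → ℝ≥0∞)
    (B : Set E) : ℝ≥0∞ :=
  sInf {t : ℝ≥0∞ | 0 < t ∧ Negligible τ (B ∩ {x | t < f x})}

/-- `ν ≪ τ`: absolute continuity. -/
def AbsCont [MeasurableSpace E] (ν τ : Set E → ℝ≥0∞) : Prop :=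
  ∀ B : Set E, MeasurableSet B → τ B = 0 → ν B = 0

/-- `ν ⋘ τ`: strong absolute continuity, i.e. `ν` has a measurable relative density
with respect to `τ`. -/
def StrongAbsCont [MeasurableSpace E] (ν τ : Set E → ℝ≥0∞) : Prop :=
  ∃ f : E → ℝ≥0∞, Premeasurable f ∧ ∀ B : Set E, MeasurableSet B → ν B = essSupOn τ f B

/-- `c` is a cardinal density of `ν`: `ν B = sup_{x ∈ B} c x` for every measurable `B`. -/
def IsCardinalDensity [MeasurableSpace E] (ν : Set E → ℝ≥0∞) (c : E → ℝ≥0∞) : Prop :=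
  ∀ B : Set E, MeasurableSet B → ν B = ⨆ x ∈ B, c x

/-- `τ` is essential: there exists a σ-finite σ-additive measure `m` with the same
null measurable sets. -/
def Essential [MeasurableSpace E] (τ : Set E → ℝ≥0∞) : Prop :=
  ∃ m : Measure E, SigmaFinite m ∧ ∀ B : Set E, MeasurableSet B → (0 < τ B ↔ 0 < m B)

/-- A σ-ideal of the σ-algebra of measurable sets. -/
def SigmaIdeal [MeasurableSpace E] (I : Set (Set E)) : Prop :=
  I.Nonempty ∧ (∀ S ∈ I, MeasurableSet S) ∧
  (∀ f : ℕ → Set E, (∀ n, f n ∈ I) → (⋃ n, f n) ∈ I) ∧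
  (∀ B S : Set E, MeasurableSet B → S ∈ I → B ⊆ S → B ∈ I)

/-- `τ` is σ-principal: every σ-ideal has a greatest element modulo `τ`-negligible sets. -/
def SigmaPrincipal [MeasurableSpace E] (τ : Set E → ℝ≥0∞) : Prop :=
  ∀ I : Set (Set E), SigmaIdeal I → ∃ L ∈ I, ∀ S ∈ I, Negligible τ (S \ L)

/-- A pseudo-multiplication on `[0,∞]`. -/
structure PseudoMul where
  op : ℝ≥0∞ → ℝ≥0∞ → ℝ≥0∞
  assoc : ∀ a b c, op (op a b) c = op a (op b c)
  contOn : ContinuousOn (fun q : ℝ≥0∞ × ℝ≥0∞ => op q.1 q.2) (Set.Ioo 0 ⊤ ×ˢ Set.univ)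
  contLeft : ∀ t, ContinuousOn (fun s => op s t) (Set.Ioi 0)
  monoLeft : ∀ t, Monotone fun s => op s t
  monoRight : ∀ s, Monotone (op s)
  one : ℝ≥0∞
  one_op : ∀ t, op one t = t
  eq_zero : ∀ s t, op s t = 0 → s = 0 ∨ t = 0
  zero_op : ∀ t, op 0 t = 0
  op_zero : ∀ t, op t 0 = 0

/-- `t` is `⊙`-finite: `inf_{s > 0} s ⊙ t = 0`. -/
def OdotFinite (p : PseudoMul) (t : ℝ≥0∞) : Prop :=
  (⨅ s ∈ Set.Ioi (0 : ℝ≥0∞), p.op s t) = 0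

/-- The idempotent `⊙`-integral `∫_B f ⊙ dτ = sup_{t ∈ [0,∞)} t ⊙ τ (B ∩ {f > t})`. -/
noncomputable def iInt [MeasurableSpace E] (p : PseudoMul) (τ : Set E → ℝ≥0∞)
    (f : E → ℝ≥0∞) (B : Set E) : ℝ≥0∞ :=
  ⨆ t ∈ Set.Iio (⊤ : ℝ≥0∞), p.op t (τ (B ∩ {x | t < f x}))

/-- `ν ≪_⊙ τ`: `ν B ≤ ∞ ⊙ τ B` for every measurable `B`. -/
def OdotAbsCont [MeasurableSpace E] (p : PseudoMul) (ν τ : Set E → ℝ≥0∞) : Prop :=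
  ∀ B : Set E, MeasurableSet B → ν B ≤ p.op ⊤ (τ B)

/-- `ν` is semi-`⊙`-finite. -/
def SemiOdotFinite [MeasurableSpace E] (p : PseudoMul) (ν : Set E → ℝ≥0∞) : Prop :=
  ∀ B : Set E, MeasurableSet B →
    ν B = ⨆ A ∈ {A : Set E | MeasurableSet A ∧ A ⊆ B ∧ OdotFinite p (ν A)}, ν A

/-- `τ` is σ-`⊙`-finite. -/
def SigmaOdotFinite [MeasurableSpace E] (p : PseudoMul) (τ : Set E → ℝ≥0∞) : Prop :=
  ∃ B : ℕ → Set E, (∀ n, MeasurableSet (B n)) ∧ (⋃ n, B n) = Set.univ ∧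
    ∀ n, OdotFinite p (τ (B n))

/-- Continuity from below. -/
def ContFromBelow [MeasurableSpace E] (ν : Set E → ℝ≥0∞) : Prop :=
  ∀ B : ℕ → Set E, (∀ n, MeasurableSet (B n)) → Monotone B →
    Tendsto (fun n => ν (B n)) atTop (nhds (ν (⋃ n, B n)))

/-- Continuity from above (no finiteness assumption). -/
def ContFromAbove [MeasurableSpace E] (ν : Set E → ℝ≥0∞) : Prop :=
  ∀ B : ℕ → Set E, (∀ n, MeasurableSet (B n)) → Antitone B →
    Tendsto (fun n => ν (B n)) atTop (nhds (ν (⋂ n, B n)))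

/-- An optimal measure: a maxitive measure continuous from below and from above. -/
def Optimal [MeasurableSpace E] (ν : Set E → ℝ≥0∞) : Prop :=
  Maxitive ν ∧ ContFromBelow ν ∧ ContFromAbove ν

/-- `τ` has the Radon–Nikodym property with respect to the idempotent `⊙`-integral. -/
def RNProperty [MeasurableSpace E] (p : PseudoMul) (τ : Set E → ℝ≥0∞) : Prop :=
  ∀ ν : Set E → ℝ≥0∞, SigmaMaxitive ν → OdotAbsCont p ν τ →
    ∃ c : E → ℝ≥0∞, Premeasurable c ∧ ∀ B : Set E, MeasurableSet B → ν B = iInt p τ c B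


/-! For rational `q`, σ-principality yields a `τ`-greatest measurable set `L q` on which
`ν ≤ q ⊙ τ`, and `c x = inf {q | x ∈ L q}` is the density. On `{c > t}` no non-null set is
dominated by `s ⊙ τ` with `s < t`, and a Hahn-type argument (again through σ-principality) turns
this into `s ⊙ τ (B ∩ {c > t}) ≤ ν B`, whence `∫_B c ⊙ dτ ≤ ν B`. Conversely `ν ≤ s ⊙ τ` on
`{c ≤ t}` for `s > t`; on a piece of `⊙`-finite measure, the critical level at which
`ν (· ∩ {c ≤ t})` exceeds a given `γ < ν B` shows `γ ≤ ∫_B c ⊙ dτ`, using continuity of `⊙`.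

For necessity, let `F` be a disjoint family of non-null sets. The measure
`B ↦ sup {x | uncountably many G ∈ F have τ (B ∩ G) > x}` vanishes on each `G ∈ F`, so its
density vanishes `τ`-a.e. on each `G`; hence the measure vanishes identically and `F` is
countable. This countable chain condition gives σ-principality by Zorn's lemma. The part of `E`
not covered by countably many `⊙`-finite sets is then null: a density of the `{0, 1_⊙}`-valued
measure of non-nullity inside it would make a non-null piece of it `⊙`-finite, because `1_⊙` is.
-/

namespace PseudoMul

variable (p : PseudoMul)

theorem one_ne_zero : p.one ≠ 0 := by
  intro h
  simpa [h, p.zero_op] using p.one_op 1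

theorem le_op_top (t : ℝ≥0∞) : t ≤ p.op ⊤ t :=
  calc t = p.op p.one t := (p.one_op t).symm
    _ ≤ p.op ⊤ t := p.monoLeft t le_top

theorem op_pos {s t : ℝ≥0∞} (hs : 0 < s) (ht : 0 < t) : 0 < p.op s t := by
  refine pos_iff_ne_zero.2 fun h => ?_
  rcases p.eq_zero s t h with h | h
  exacts [hs.ne' h, ht.ne' h]

theorem continuousAt_op {s : ℝ≥0∞} (hs : 0 < s) (hs' : s < ⊤) (y : ℝ≥0∞) :
    ContinuousAt (p.op s) y :=
  (p.contOn.continuousAt ((isOpen_Ioo.prod isOpen_univ).mem_nhds ⟨⟨hs, hs'⟩, trivial⟩)).comp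
    (continuous_const.prodMk continuous_id).continuousAt

theorem op_iSup {s : ℝ≥0∞} (hs : 0 < s) (hs' : s < ⊤) {ι : Sort*} (g : ι → ℝ≥0∞) :
    p.op s (⨆ i, g i) = ⨆ i, p.op s (g i) :=
  Monotone.map_iSup_of_continuousAt (p.continuousAt_op hs hs' _) (p.monoRight s) (p.op_zero s)

theorem op_le_of_forall_lt {t y z : ℝ≥0∞} (ht : 0 < t)
    (h : ∀ s, 0 < s → s < t → p.op s y ≤ z) : p.op t y ≤ z := by
  obtain ⟨u, -, hu, hut⟩ := exists_seq_strictMono_tendsto' ht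
  have hlim : Tendsto (fun n => p.op (u n) y) atTop (nhds (p.op t y)) :=
    ((p.contLeft y) t ht).tendsto.comp
      (tendsto_nhdsWithin_of_tendsto_nhds_of_eventually_within u hut
        (Eventually.of_forall fun n => (hu n).1))
  exact le_of_tendsto hlim (Eventually.of_forall fun n => h _ (hu n).1 (hu n).2)

theorem le_op_of_forall_gt {t y z : ℝ≥0∞} (ht : 0 < t) (ht' : t < ⊤)
    (h : ∀ s, t < s → s < ⊤ → z ≤ p.op s y) : z ≤ p.op t y := by
  obtain ⟨u, -, hu, hut⟩ := exists_seq_strictAnti_tendsto' ht'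
  have hlim : Tendsto (fun n => p.op (u n) y) atTop (nhds (p.op t y)) :=
    ((p.contLeft y) t ht).tendsto.comp
      (tendsto_nhdsWithin_of_tendsto_nhds_of_eventually_within u hut
        (Eventually.of_forall fun n => ht.trans (hu n).1))
  exact ge_of_tendsto hlim (Eventually.of_forall fun n => h _ (hu n).1 (hu n).2)

end PseudoMul

namespace OdotFinite

variable {p : PseudoMul}

theorem zero (p : PseudoMul) : OdotFinite p 0 :=
  le_antisymm ((biInf_le (fun s => p.op s 0) (mem_Ioi.2 zero_lt_one)).trans_eq (p.op_zero 1))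
    bot_le

theorem mono {x y : ℝ≥0∞} (hy : OdotFinite p y) (h : x ≤ y) : OdotFinite p x :=
  le_antisymm ((iInf₂_mono fun s _ => p.monoRight s h).trans_eq hy) bot_le

theorem of_op_le {t x y : ℝ≥0∞} (hx : OdotFinite p x) (ht : 0 < t) (h : p.op t y ≤ x) :
    OdotFinite p y := by
  refine le_antisymm (le_of_le_of_eq ?_ hx) bot_le
  refine le_iInf₂ fun s (hs : 0 < s) => ?_
  calc ⨅ u ∈ Ioi 0, p.op u y ≤ p.op (p.op s t) y := biInf_le _ (p.op_pos hs ht)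
    _ = p.op s (p.op t y) := p.assoc s t y
    _ ≤ p.op s x := p.monoRight s h

end OdotFinite

section Maxitive

variable [MeasurableSpace E] {ν τ : Set E → ℝ≥0∞}

theorem Maxitive.mono (h : Maxitive ν) {A B : Set E} (hA : MeasurableSet A)
    (hB : MeasurableSet B) (hAB : A ⊆ B) : ν A ≤ ν B := by
  simpa [union_eq_self_of_subset_left hAB] using (h.2 A B hA hB).ge

theorem Negligible.mono {A B : Set E} (h : Negligible τ B) (hAB : A ⊆ B) : Negligible τ A :=
  let ⟨C, hC, hBC, hC0⟩ := h
  ⟨C, hC, hAB.trans hBC, hC0⟩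

theorem Negligible.measure_eq_zero {A : Set E} (h : Negligible τ A) (hτ : Maxitive τ)
    (hA : MeasurableSet A) : τ A = 0 := by
  obtain ⟨B, hB, hAB, hB0⟩ := h
  exact le_antisymm (hB0 ▸ hτ.mono hA hB hAB) bot_le

theorem measurableSet_accumulate {f : ℕ → Set E} (hf : ∀ n, MeasurableSet (f n)) (n : ℕ) :
    MeasurableSet (accumulate f n) := by
  rw [accumulate_def]
  exact .biUnion (to_countable _) fun k _ => hf k

theorem Maxitive.apply_accumulate_le (h : Maxitive ν) {f : ℕ → Set E}
    (hf : ∀ n, MeasurableSet (f n)) (n : ℕ) : ν (accumulate f n) ≤ ⨆ k, ν (f k) := by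
  induction n with
  | zero => simpa using le_iSup (fun k => ν (f k)) 0
  | succ n ih =>
    rw [accumulate_succ, h.2 _ _ (measurableSet_accumulate hf n) (hf (n + 1))]
    exact max_le ih (le_iSup (fun k => ν (f k)) (n + 1))

theorem SigmaMaxitive.apply_iUnion (h : SigmaMaxitive ν) {ι : Type*} [Countable ι]
    {f : ι → Set E} (hf : ∀ i, MeasurableSet (f i)) : ν (⋃ i, f i) = ⨆ i, ν (f i) := by
  cases isEmpty_or_nonempty ι with
  | inl _ => simp [h.1.1]
  | inr _ =>
    obtain ⟨g, hg⟩ := exists_surjective_nat ι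
    rw [← hg.iUnion_comp f, ← hg.iSup_comp fun i => ν (f i), ← iUnion_accumulate,
      h.2 _ (measurableSet_accumulate fun n => hf (g n)) monotone_accumulate]
    exact le_antisymm (iSup_le (h.1.apply_accumulate_le fun n => hf (g n)))
      (iSup_mono fun n => h.1.mono (hf (g n)) (measurableSet_accumulate (fun n => hf (g n)) n)
        (subset_accumulate (s := fun n => f (g n))))

theorem SigmaMaxitive.inter (h : SigmaMaxitive τ) {R : Set E} (hR : MeasurableSet R) :
    SigmaMaxitive fun B => τ (B ∩ R) := by
  refine ⟨⟨by simpa using h.1.1, fun A B hA hB => ?_⟩, fun f hf _ => ?_⟩ <;> dsimp only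
  · rw [union_inter_distrib_right, h.1.2 _ _ (hA.inter hR) (hB.inter hR)]
  · rw [iUnion_inter, h.apply_iUnion fun n => (hf n).inter hR]

theorem SigmaMaxitive.ite_eq_zero (h : SigmaMaxitive τ) (a : ℝ≥0∞) :
    SigmaMaxitive fun B => if τ B = 0 then 0 else a := by
  refine ⟨⟨by simp [h.1.1], fun A B hA hB => ?_⟩, fun f hf _ => ?_⟩ <;> dsimp only
  · rw [h.1.2 A B hA hB]
    by_cases hA0 : τ A = 0 <;> by_cases hB0 : τ B = 0 <;> simp [hA0, hB0]
  · rw [h.apply_iUnion hf]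
    split_ifs with h0
    · simp [ENNReal.iSup_eq_zero.1 h0]
    · obtain ⟨n, hn⟩ := not_forall.1 (mt ENNReal.iSup_eq_zero.2 h0)
      exact le_antisymm (le_iSup_of_le n (by simp [hn])) (iSup_le fun k => by split_ifs <;> simp)

end Maxitive

section Ideals

variable [MeasurableSpace E] {ν τ : Set E → ℝ≥0∞} {I : Set (Set E)}

theorem SigmaIdeal.empty_mem (h : SigmaIdeal I) : ∅ ∈ I := by
  obtain ⟨S, hS⟩ := h.1
  exact h.2.2.2 ∅ S .empty hS (empty_subset S)

theorem SigmaIdeal.sUnion_mem (h : SigmaIdeal I) {M : Set (Set E)} (hM : M.Countable)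
    (hMI : M ⊆ I) : ⋃₀ M ∈ I := by
  rcases M.eq_empty_or_nonempty with rfl | hne
  · simpa using h.empty_mem
  · obtain ⟨f, rfl⟩ := hM.exists_eq_range hne
    rw [sUnion_range]
    exact h.2.2.1 f fun n => hMI (mem_range_self n)

def DominatedOn (p : PseudoMul) (ν τ : Set E → ℝ≥0∞) (w : ℝ≥0∞) (S : Set E) : Prop :=
  ∀ A, MeasurableSet A → A ⊆ S → ν A ≤ p.op w (τ A)

variable {p : PseudoMul}

theorem DominatedOn.mono_left {w w' : ℝ≥0∞} {S : Set E} (h : DominatedOn p ν τ w S)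
    (hw : w ≤ w') : DominatedOn p ν τ w' S :=
  fun A hA hAS => (h A hA hAS).trans (p.monoLeft _ hw)

theorem sigmaIdeal_dominatedOn (hν : SigmaMaxitive ν) (hτ : Maxitive τ) (w : ℝ≥0∞) :
    SigmaIdeal {S | MeasurableSet S ∧ DominatedOn p ν τ w S} := by
  refine ⟨⟨∅, .empty, fun A _ hA => ?_⟩, fun S hS => hS.1, fun f hf => ⟨.iUnion fun n => (hf n).1,
    fun A hA hAf => ?_⟩, fun B S hB hS hBS => ⟨hB, fun A hA hAB => hS.2 A hA (hAB.trans hBS)⟩⟩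
  · simp [subset_empty_iff.1 hA, hν.1.1]
  · calc ν A = ν (⋃ n, A ∩ f n) := by rw [← inter_iUnion, inter_eq_left.2 hAf]
      _ = ⨆ n, ν (A ∩ f n) := hν.apply_iUnion fun n => hA.inter (hf n).1
      _ ≤ p.op w (τ A) := iSup_le fun n =>
        ((hf n).2 _ (hA.inter (hf n).1) inter_subset_right).trans
          (p.monoRight _ (hτ.mono (hA.inter (hf n).1) hA inter_subset_left))

end Ideals

section Integral

variable [MeasurableSpace E] {p : PseudoMul} {τ : Set E → ℝ≥0∞} {c : E → ℝ≥0∞} {B : Set E}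

theorem op_le_iInt {t : ℝ≥0∞} (ht : t < ⊤) :
    p.op t (τ (B ∩ {x | t < c x})) ≤ iInt p τ c B :=
  le_iSup₂ (f := fun t (_ : t ∈ Iio ⊤) => p.op t (τ (B ∩ {x | t < c x}))) t ht

theorem iInt_eq_zero_iff :
    iInt p τ c B = 0 ↔ ∀ t, 0 < t → t < ⊤ → τ (B ∩ {x | t < c x}) = 0 := by
  simp only [iInt, ENNReal.iSup_eq_zero, mem_Iio]
  refine forall_congr' fun t => ⟨fun h ht0 ht => ?_, fun h ht => ?_⟩
  · exact (p.eq_zero _ _ (h ht)).resolve_left ht0.ne'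
  · rcases eq_zero_or_pos t with rfl | ht0
    · exact p.zero_op _
    · rw [h ht0 ht, p.op_zero]

theorem op_le_iInt_of_subset (hτ : Maxitive τ) (hc : Premeasurable c) (hB : MeasurableSet B)
    {A : Set E} (hA : MeasurableSet A) (hAB : A ⊆ B) {t : ℝ≥0∞} (ht : 0 < t)
    (hAt : A ⊆ {x | t ≤ c x}) : p.op t (τ A) ≤ iInt p τ c B := by
  refine p.op_le_of_forall_lt ht fun s _ hst => ?_
  calc p.op s (τ A) ≤ p.op s (τ (B ∩ {x | s < c x})) :=
        p.monoRight s (hτ.mono hA (hB.inter (hc s))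
          fun x hx => ⟨hAB hx, hst.trans_le (hAt hx)⟩)
    _ ≤ iInt p τ c B := op_le_iInt (hst.trans_le le_top)

end Integral

section Sufficiency

variable [MeasurableSpace E] {p : PseudoMul} {ν τ : Set E → ℝ≥0∞} {c : E → ℝ≥0∞}

theorem Measurable.premeasurable (hc : Measurable c) : Premeasurable c :=
  fun _ => measurableSet_lt measurable_const hc

theorem OdotAbsCont.absCont (h : OdotAbsCont p ν τ) : AbsCont ν τ :=
  fun B hB hB0 => le_antisymm ((h B hB).trans_eq (hB0 ▸ p.op_zero ⊤)) bot_le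

theorem SigmaMaxitive.apply_inter_lt_le (hν : SigmaMaxitive ν) (hc : Measurable c)
    {W : Set E} (hW : MeasurableSet W) {u γ : ℝ≥0∞}
    (h : ∀ t < u, ν (W ∩ {x | c x ≤ t}) ≤ γ) : ν (W ∩ {x | c x < u}) ≤ γ := by
  have hcover : W ∩ {x | c x < u} ⊆ ⋃ q : {q : ℚ // ENNReal.ofReal q < u},
      W ∩ {x | c x ≤ ENNReal.ofReal q} := fun x ⟨hxW, hxu⟩ => by
    obtain ⟨q, -, hxq, hqu⟩ := ENNReal.lt_iff_exists_rat_btwn.1 hxu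
    exact mem_iUnion.2 ⟨⟨q, hqu⟩, hxW, hxq.le⟩
  calc ν (W ∩ {x | c x < u}) ≤ ν (⋃ q : {q : ℚ // ENNReal.ofReal q < u},
        W ∩ {x | c x ≤ ENNReal.ofReal q}) :=
        hν.1.mono (hW.inter (measurableSet_lt hc measurable_const))
          (.iUnion fun _ => hW.inter (measurableSet_le hc measurable_const)) hcover
    _ = ⨆ q : {q : ℚ // ENNReal.ofReal q < u}, ν (W ∩ {x | c x ≤ ENNReal.ofReal q}) :=
        hν.apply_iUnion fun _ => hW.inter (measurableSet_le hc measurable_const)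
    _ ≤ γ := iSup_le fun q => h _ q.2

theorem op_le_of_forall_dominatedOn_null (hτ : SigmaMaxitive τ) (hpr : SigmaPrincipal τ)
    (hν : Maxitive ν) (hντ : AbsCont ν τ) {w : ℝ≥0∞} (hw0 : 0 < w) (hw : w < ⊤) {A : Set E}
    (hA : MeasurableSet A)
    (hnull : ∀ S, MeasurableSet S → S ⊆ A → DominatedOn p ν τ w S → τ S = 0) :
    p.op w (τ A) ≤ ν A := by
  set K := {S | MeasurableSet S ∧ S ⊆ A ∧ p.op w (τ S) ≤ ν A}
  have hK : SigmaIdeal K := by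
    refine ⟨⟨∅, .empty, empty_subset A, by simp [hτ.1.1, p.op_zero]⟩, fun S hS => hS.1,
      fun f hf => ⟨.iUnion fun n => (hf n).1, iUnion_subset fun n => (hf n).2.1, ?_⟩,
      fun B S hB hS hBS => ⟨hB, hBS.trans hS.2.1,
        (p.monoRight w (hτ.1.mono hB hS.1 hBS)).trans hS.2.2⟩⟩
    rw [hτ.apply_iUnion fun n => (hf n).1, p.op_iSup hw0 hw]
    exact iSup_le fun n => (hf n).2.2
  obtain ⟨L, hL, hLmax⟩ := hpr K hK
  -- A subset of `A \ L` either lies in `K`, hence is null, or has `ν`-measure below `w ⊙ τ`.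
  have hdom : DominatedOn p ν τ w (A \ L) := by
    intro S hS hSR
    by_cases hSK : p.op w (τ S) ≤ ν A
    · have hSL : S ⊆ S \ L := fun x hx => ⟨hx, (hSR hx).2⟩
      rw [hντ S hS (((hLmax S ⟨hS, hSR.trans sdiff_subset, hSK⟩).mono hSL).measure_eq_zero
        hτ.1 hS)]
      exact bot_le
    · exact (hν.mono hS hA (hSR.trans sdiff_subset)).trans (not_le.1 hSK).le
  have hR0 : τ (A \ L) = 0 := hnull _ (hA.diff hL.1) sdiff_subset hdom
  calc p.op w (τ A) = p.op w (max (τ L) (τ (A \ L))) := by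
        rw [← hτ.1.2 _ _ hL.1 (hA.diff hL.1), union_sdiff_cancel hL.2.1]
    _ = max (p.op w (τ L)) (p.op w (τ (A \ L))) := (p.monoRight w).map_max
    _ ≤ ν A := max_le hL.2.2 (by simp [hR0, p.op_zero])

theorem iInt_le_of_forall_dominatedOn_null (hτ : SigmaMaxitive τ) (hpr : SigmaPrincipal τ)
    (hν : Maxitive ν) (hντ : AbsCont ν τ) (hc : Premeasurable c)
    (hnull : ∀ w t, w < t → ∀ S, MeasurableSet S → S ⊆ {x | t ≤ c x} →
      DominatedOn p ν τ w S → τ S = 0)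
    {B : Set E} (hB : MeasurableSet B) : iInt p τ c B ≤ ν B := by
  refine iSup₂_le fun t (ht : t < ⊤) => ?_
  rcases eq_zero_or_pos t with rfl | ht0
  · simp [p.zero_op]
  have hA : MeasurableSet (B ∩ {x | t < c x}) := hB.inter (hc t)
  refine p.op_le_of_forall_lt ht0 fun s hs hst => ?_
  calc p.op s (τ (B ∩ {x | t < c x})) ≤ ν (B ∩ {x | t < c x}) :=
        op_le_of_forall_dominatedOn_null hτ hpr hν hντ hs (hst.trans ht) hA
          fun S hS hSA => hnull s t hst S hS fun x hx => show t ≤ c x from (hSA hx).2.le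
    _ ≤ ν B := hν.mono hA hB inter_subset_left

theorem le_op_measure_superlevel_of_crossing (hτ : Maxitive τ) (hν : SigmaMaxitive ν)
    (hc : Measurable c)
    (hdom : ∀ t s, t < s → ∀ S, MeasurableSet S → S ⊆ {x | c x ≤ t} → ν S ≤ p.op s (τ S))
    {W : Set E} (hW : MeasurableSet W) {t₀ γ : ℝ≥0∞} (ht₀0 : 0 < t₀) (ht₀ : t₀ < ⊤)
    (hbelow : ν (W ∩ {x | c x < t₀}) ≤ γ) (habove : ∀ t, t₀ < t → γ < ν (W ∩ {x | c x ≤ t})) :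
    γ ≤ p.op t₀ (τ (W ∩ {x | t₀ ≤ c x})) := by
  set W₀ := W ∩ {x | t₀ ≤ c x}
  have hW₀ : MeasurableSet W₀ := hW.inter (measurableSet_le measurable_const hc)
  have hlt : MeasurableSet (W ∩ {x | c x < t₀}) := hW.inter (measurableSet_lt hc measurable_const)
  refine p.le_op_of_forall_gt ht₀0 ht₀ fun s hs _ => ?_
  obtain ⟨t, ht₀t, hts⟩ := exists_between hs
  have hle : MeasurableSet (W₀ ∩ {x | c x ≤ t}) := hW₀.inter (measurableSet_le hc measurable_const)
  have hsplit : W ∩ {x | c x ≤ t} ⊆ W ∩ {x | c x < t₀} ∪ W₀ ∩ {x | c x ≤ t} :=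
    fun x ⟨hxW, hxt⟩ => (lt_or_ge (c x) t₀).imp (fun h => ⟨hxW, h⟩) fun h => ⟨⟨hxW, h⟩, hxt⟩
  have hmax : γ < max (ν (W ∩ {x | c x < t₀})) (ν (W₀ ∩ {x | c x ≤ t})) :=
    (habove t ht₀t).trans_le <| (hν.1.mono (hW.inter (measurableSet_le hc measurable_const))
      (hlt.union hle) hsplit).trans_eq (hν.1.2 _ _ hlt hle)
  calc γ ≤ ν (W₀ ∩ {x | c x ≤ t}) := ((lt_max_iff.1 hmax).resolve_left hbelow.not_gt).le
    _ ≤ p.op s (τ (W₀ ∩ {x | c x ≤ t})) := hdom t s hts _ hle inter_subset_right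
    _ ≤ p.op s (τ W₀) := p.monoRight s (hτ.mono hle hW₀ inter_subset_left)

theorem le_iInt_of_odotFinite (hτ : Maxitive τ) (hν : SigmaMaxitive ν) (hc : Measurable c)
    (hdom : ∀ t s, t < s → ∀ S, MeasurableSet S → S ⊆ {x | c x ≤ t} → ν S ≤ p.op s (τ S))
    {B W : Set E} (hB : MeasurableSet B) (hW : MeasurableSet W) (hWB : W ⊆ B)
    (hWc : W ⊆ {x | c x < ⊤}) (hWfin : OdotFinite p (τ W)) : ν W ≤ iInt p τ c B := by
  have hle : ∀ t, MeasurableSet {x | c x ≤ t} := fun t => measurableSet_le hc measurable_const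
  refine le_of_forall_lt_imp_le_of_dense fun γ hγ => ?_
  set t₀ := sSup {t | ν (W ∩ {x | c x ≤ t}) ≤ γ}
  have habove : ∀ t, t₀ < t → γ < ν (W ∩ {x | c x ≤ t}) :=
    fun t ht => not_le.1 fun h => (le_sSup (s := {t | ν (W ∩ {x | c x ≤ t}) ≤ γ}) h).not_gt ht
  have hbelow : ν (W ∩ {x | c x < t₀}) ≤ γ := hν.apply_inter_lt_le hc hW fun t ht => by
    obtain ⟨t', ht', htt'⟩ := lt_sSup_iff.1 ht
    exact (hν.1.mono (hW.inter (hle t)) (hW.inter (hle t'))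
      (inter_subset_inter_right W fun x hx => le_trans hx htt'.le)).trans ht'
  have ht₀ : t₀ < ⊤ := lt_top_iff_ne_top.2 fun h => hγ.not_ge <| by
    rwa [h, inter_eq_left.2 hWc] at hbelow
  rcases eq_zero_or_pos t₀ with ht₀0 | ht₀0
  · refine le_trans (le_iInf₂ fun s (hs : 0 < s) => ?_) (le_of_eq_of_le hWfin bot_le)
    obtain ⟨t, ht0, hts⟩ := exists_between hs
    calc γ ≤ ν (W ∩ {x | c x ≤ t}) := (habove t (ht₀0 ▸ ht0)).le
      _ ≤ p.op s (τ (W ∩ {x | c x ≤ t})) := hdom t s hts _ (hW.inter (hle t)) inter_subset_right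
      _ ≤ p.op s (τ W) := p.monoRight s (hτ.mono (hW.inter (hle t)) hW inter_subset_left)
  exact (le_op_measure_superlevel_of_crossing hτ hν hc hdom hW ht₀0 ht₀ hbelow habove).trans
    (op_le_iInt_of_subset hτ hc.premeasurable hB (hW.inter (measurableSet_le measurable_const hc))
      (inter_subset_left.trans hWB) ht₀0 inter_subset_right)

theorem le_iInt_of_sigmaOdotFinite (hτ : Maxitive τ) (hν : SigmaMaxitive ν)
    (hντ : OdotAbsCont p ν τ) (hfin : SigmaOdotFinite p τ) (hc : Measurable c)
    (hdom : ∀ t s, t < s → ∀ S, MeasurableSet S → S ⊆ {x | c x ≤ t} → ν S ≤ p.op s (τ S))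
    {B : Set E} (hB : MeasurableSet B) : ν B ≤ iInt p τ c B := by
  obtain ⟨D, hD, hDcover, hDfin⟩ := hfin
  have htop : MeasurableSet (B ∩ {x | c x = ⊤}) := hB.inter (hc (measurableSet_singleton ⊤))
  have hfinite : ∀ n, MeasurableSet (B ∩ D n ∩ {x | c x < ⊤}) :=
    fun n => (hB.inter (hD n)).inter (measurableSet_lt hc measurable_const)
  have hcover : B ⊆ B ∩ {x | c x = ⊤} ∪ ⋃ n, B ∩ D n ∩ {x | c x < ⊤} := fun x hx => by
    obtain ⟨n, hn⟩ := mem_iUnion.1 (hDcover.symm ▸ mem_univ x : x ∈ ⋃ n, D n)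
    rcases eq_or_ne (c x) ⊤ with h | h
    exacts [Or.inl ⟨hx, h⟩, Or.inr (mem_iUnion.2 ⟨n, ⟨hx, hn⟩, lt_top_iff_ne_top.2 h⟩)]
  refine (hν.1.mono hB (htop.union (.iUnion hfinite)) hcover).trans ?_
  rw [hν.1.2 _ _ htop (.iUnion hfinite), hν.apply_iUnion hfinite]
  refine max_le ((hντ _ htop).trans ?_) (iSup_le fun n => ?_)
  · exact op_le_iInt_of_subset hτ hc.premeasurable hB htop inter_subset_left ENNReal.zero_lt_top
      fun x hx => hx.2.ge
  · exact le_iInt_of_odotFinite hτ hν hc hdom hB (hfinite n)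
      (inter_subset_left.trans inter_subset_left) inter_subset_right
      ((hDfin n).mono (hτ.mono (hfinite n) (hD n) (inter_subset_left.trans inter_subset_right)))

open Classical in
theorem exists_measurable_density (hτ : Maxitive τ) (hpr : SigmaPrincipal τ)
    (hν : SigmaMaxitive ν) : ∃ c : E → ℝ≥0∞, Measurable c ∧
      (∀ t s, t < s → ∀ S, MeasurableSet S → S ⊆ {x | c x ≤ t} → ν S ≤ p.op s (τ S)) ∧
      (∀ w t, w < t → ∀ S, MeasurableSet S → S ⊆ {x | t ≤ c x} →
        DominatedOn p ν τ w S → τ S = 0) := by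
  choose L hL hLmax using fun q : ℚ =>
    hpr _ (sigmaIdeal_dominatedOn (p := p) hν hτ (ENNReal.ofReal q))
  set c : E → ℝ≥0∞ := fun x => ⨅ q : ℚ, if x ∈ L q then ENNReal.ofReal q else ⊤
  have hc_le : ∀ q x, x ∈ L q → c x ≤ ENNReal.ofReal q :=
    fun q x hx => iInf_le_of_le q (by simp [hx])
  have hc_lt : ∀ x s, c x < s → ∃ q : ℚ, x ∈ L q ∧ ENNReal.ofReal q < s := fun x s h => by
    obtain ⟨q, hq⟩ := iInf_lt_iff.1 h
    by_cases hx : x ∈ L q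
    · exact ⟨q, hx, by simpa [hx] using hq⟩
    · simp [hx] at hq
  refine ⟨c, .iInf fun q => .ite (hL q).1 measurable_const measurable_const, ?_, ?_⟩
  · intro t s hts S hS hSt
    have hcover : S ⊆ ⋃ q : {q : ℚ // ENNReal.ofReal q < s}, S ∩ L q := fun x hx => by
      obtain ⟨q, hxq, hqs⟩ := hc_lt x s ((hSt hx).trans_lt hts)
      exact mem_iUnion.2 ⟨⟨q, hqs⟩, hx, hxq⟩
    have hSL : ∀ q : ℚ, MeasurableSet (S ∩ L q) := fun q => hS.inter (hL q).1
    calc ν S ≤ ν (⋃ q : {q : ℚ // ENNReal.ofReal q < s}, S ∩ L q) :=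
          hν.1.mono hS (.iUnion fun q => hSL q) hcover
      _ = ⨆ q : {q : ℚ // ENNReal.ofReal q < s}, ν (S ∩ L q) :=
          hν.apply_iUnion fun q => hSL q
      _ ≤ p.op s (τ S) := iSup_le fun q =>
          ((hL q).2 _ (hSL q) inter_subset_right).trans <|
            (p.monoLeft _ q.2.le).trans (p.monoRight s (hτ.mono (hSL q) hS inter_subset_left))
  · intro w t hwt S hS hSt hSw
    obtain ⟨q, -, hwq, hqt⟩ := ENNReal.lt_iff_exists_rat_btwn.1 hwt
    have hSL : S ⊆ S \ L q :=
      fun x hx => ⟨hx, fun hxL => ((hc_le q x hxL).trans_lt hqt).not_ge (hSt hx)⟩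
    exact ((hLmax q S ⟨hS, hSw.mono_left hwq.le⟩).mono hSL).measure_eq_zero hτ hS

theorem rnProperty_of_sigmaOdotFinite_of_sigmaPrincipal (hτ : SigmaMaxitive τ)
    (hfin : SigmaOdotFinite p τ) (hpr : SigmaPrincipal τ) : RNProperty p τ := by
  intro ν hν hντ
  obtain ⟨c, hc, hdom, hnull⟩ := exists_measurable_density (p := p) hτ.1 hpr hν
  exact ⟨c, hc.premeasurable, fun B hB =>
    le_antisymm (le_iInt_of_sigmaOdotFinite hτ.1 hν hντ hfin hc hdom hB)
      (iInt_le_of_forall_dominatedOn_null hτ hpr hν.1 hντ.absCont hc.premeasurable hnull hB)⟩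

end Sufficiency

section UncountableSup

variable {ι : Type*}

noncomputable def uncountableSup (f : ι → ℝ≥0∞) : ℝ≥0∞ :=
  sSup {x | ¬ {i | x < f i}.Countable}

theorem uncountableSup_le_iSup (f : ι → ℝ≥0∞) : uncountableSup f ≤ ⨆ i, f i :=
  sSup_le fun x (hx : ¬ {i | x < f i}.Countable) => by
    obtain ⟨i, hi⟩ : {i | x < f i}.Nonempty :=
      nonempty_iff_ne_empty.2 fun h => hx (h ▸ countable_empty)
    exact le_iSup_of_le i (le_of_lt hi)

theorem uncountableSup_eq_zero {f : ι → ℝ≥0∞} (hf : {i | f i ≠ 0}.Countable) :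
    uncountableSup f = 0 :=
  le_antisymm (sSup_le fun _ hx => (hx (hf.mono fun _ hi => ne_bot_of_gt hi)).elim) bot_le

theorem uncountableSup_ne_zero [Uncountable ι] {f : ι → ℝ≥0∞} (hf : ∀ i, f i ≠ 0) :
    uncountableSup f ≠ 0 := by
  have hcover : ⋃ n : ℕ, {i | (n : ℝ≥0∞)⁻¹ < f i} = univ :=
    eq_univ_of_forall fun i => mem_iUnion.2 (ENNReal.exists_inv_nat_lt (hf i))
  obtain ⟨n, hn⟩ : ∃ n : ℕ, ¬ {i | (n : ℝ≥0∞)⁻¹ < f i}.Countable := by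
    by_contra! h
    exact not_countable_univ (hcover ▸ countable_iUnion h)
  exact ne_bot_of_le_ne_bot (ENNReal.inv_ne_zero.2 (ENNReal.natCast_ne_top n)) (le_sSup hn)

theorem uncountableSup_max (f g : ι → ℝ≥0∞) :
    uncountableSup (fun i => max (f i) (g i)) = max (uncountableSup f) (uncountableSup g) := by
  simp only [uncountableSup, lt_max_iff, ofPred_or, countable_union, not_and_or,
    sSup_union]

theorem uncountableSup_iSup (f : ℕ → ι → ℝ≥0∞) :
    uncountableSup (fun i => ⨆ n, f n i) = ⨆ n, uncountableSup (f n) := by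
  simp only [uncountableSup, lt_iSup_iff, ofPred_exists, countable_iUnion_iff, not_forall,
    sSup_iUnion]

variable [MeasurableSpace E]

theorem SigmaMaxitive.uncountableSup {τ : ι → Set E → ℝ≥0∞} (h : ∀ i, SigmaMaxitive (τ i)) :
    SigmaMaxitive fun B => uncountableSup fun i => τ i B := by
  refine ⟨⟨uncountableSup_eq_zero (by simp [fun i => (h i).1.1]), fun A B hA hB => ?_⟩,
    fun f hf hmono => ?_⟩ <;> dsimp only
  · simp only [fun i => (h i).1.2 A B hA hB, uncountableSup_max]
  · simp only [fun i => (h i).2 f hf hmono, uncountableSup_iSup]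

end UncountableSup

section Necessity

variable [MeasurableSpace E] {p : PseudoMul} {τ : Set E → ℝ≥0∞}

def CountableChainCondition (τ : Set E → ℝ≥0∞) : Prop :=
  ∀ F : Set (Set E), (∀ G ∈ F, MeasurableSet G ∧ τ G ≠ 0) → F.PairwiseDisjoint id → F.Countable

theorem countableChainCondition_of_rnProperty (hτ : SigmaMaxitive τ) (hRN : RNProperty p τ) :
    CountableChainCondition τ := by
  intro F hF hdisj
  by_contra hunc
  have : Uncountable F := ⟨fun h => hunc (countable_coe_iff.1 h)⟩
  set ν : Set E → ℝ≥0∞ := fun B => uncountableSup fun G : F => τ (B ∩ G)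
  have hν : SigmaMaxitive ν := SigmaMaxitive.uncountableSup fun G => hτ.inter (hF G G.2).1
  have hντ : OdotAbsCont p ν τ := fun B hB =>
    (uncountableSup_le_iSup _).trans <| (iSup_le fun G : F =>
      hτ.1.mono (hB.inter (hF G G.2).1) hB inter_subset_left).trans (p.le_op_top _)
  obtain ⟨c, hc, hνc⟩ := hRN ν hν hντ
  have hG : ∀ G ∈ F, ∀ t, 0 < t → t < ⊤ → τ (G ∩ {x | t < c x}) = 0 := by
    intro G hG
    refine iInt_eq_zero_iff.1 ((hνc G (hF G hG).1).symm.trans (uncountableSup_eq_zero ?_))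
    refine (countable_singleton (⟨G, hG⟩ : F)).mono fun G' (hG' : τ (G ∩ G') ≠ 0) => ?_
    by_contra hne
    have hGG' : G ∩ G' = ∅ := (hdisj hG G'.2 fun h => hne (Subtype.ext h.symm)).inter_eq
    exact hG' (by rw [hGG', hτ.1.1])
  obtain ⟨t, ht0, ht, hτt⟩ : ∃ t, 0 < t ∧ t < ⊤ ∧ τ (univ ∩ {x | t < c x}) ≠ 0 := by
    by_contra! h
    refine uncountableSup_ne_zero (fun G : F => ?_) ((hνc univ .univ).trans (iInt_eq_zero_iff.2 h))
    simpa using (hF G G.2).2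
  have hνt : ν {x | t < c x} = 0 := uncountableSup_eq_zero <| by
    simp [inter_comm, hG _ (Subtype.prop _) t ht0 ht]
  have := iInt_eq_zero_iff.1 ((hνc _ (hc t)).symm.trans hνt) t ht0 ht
  rw [inter_self] at this
  exact hτt (by rwa [univ_inter])

theorem CountableChainCondition.sigmaPrincipal (hτ : Maxitive τ) (h : CountableChainCondition τ) :
    SigmaPrincipal τ := by
  intro I hI
  set 𝒟 := {F : Set (Set E) | (∀ G ∈ F, G ∈ I ∧ τ G ≠ 0) ∧ F.PairwiseDisjoint id}
  obtain ⟨M, hM⟩ : ∃ M, Maximal (· ∈ 𝒟) M := zorn_subset 𝒟 fun C hC𝒟 hC =>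
    ⟨⋃₀ C, ⟨fun G ⟨F, hF, hGF⟩ => (hC𝒟 hF).1 G hGF,
      (hC.pairwiseDisjoint_sUnion id).2 fun F hF => (hC𝒟 hF).2⟩, fun _ => subset_sUnion_of_mem⟩
  have hMc : M.Countable :=
    h M (fun G hG => ⟨hI.2.1 G (hM.prop.1 G hG).1, (hM.prop.1 G hG).2⟩) hM.prop.2
  have hL : ⋃₀ M ∈ I := hI.sUnion_mem hMc fun G hG => (hM.prop.1 G hG).1
  refine ⟨⋃₀ M, hL, fun S hS => ⟨S \ ⋃₀ M, (hI.2.1 S hS).diff (hI.2.1 _ hL), subset_rfl, ?_⟩⟩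
  by_contra h0
  have hins : insert (S \ ⋃₀ M) M ∈ 𝒟 := by
    refine ⟨forall_mem_insert.2 ⟨⟨hI.2.2.2 _ S ((hI.2.1 S hS).diff (hI.2.1 _ hL)) hS
      sdiff_subset, h0⟩, hM.prop.1⟩, hM.prop.2.insert fun G hG _ => ?_⟩
    exact disjoint_sdiff_left.mono_right (subset_sUnion_of_mem hG)
  have hempty : S \ ⋃₀ M = ∅ :=
    eq_empty_of_subset_empty fun x hx => hx.2 (subset_sUnion_of_mem (hM.mem_of_prop_insert hins) hx)
  exact h0 (hempty ▸ hτ.1)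

theorem measure_eq_zero_of_forall_odotFinite_null (hp : OdotFinite p p.one)
    (hτ : SigmaMaxitive τ) (hRN : RNProperty p τ) {R : Set E} (hR : MeasurableSet R)
    (hRnull : ∀ S, MeasurableSet S → S ⊆ R → OdotFinite p (τ S) → τ S = 0) : τ R = 0 := by
  by_contra hR0
  set ν : Set E → ℝ≥0∞ := fun B => if τ (B ∩ R) = 0 then 0 else p.one
  have hντ : OdotAbsCont p ν τ := fun B hB => by
    dsimp only [ν]
    split_ifs with hBR
    · exact bot_le
    have hone : p.one ≤ τ (B ∩ R) := le_of_not_ge fun hle =>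
      hBR (hRnull _ (hB.inter hR) inter_subset_right (hp.mono hle))
    exact hone.trans ((hτ.1.mono (hB.inter hR) hB inter_subset_left).trans (p.le_op_top _))
  obtain ⟨c, hc, hνc⟩ := hRN ν ((hτ.inter hR).ite_eq_zero p.one) hντ
  obtain ⟨t, ht0, ht, hZ⟩ : ∃ t, 0 < t ∧ t < ⊤ ∧ τ (R ∩ {x | t < c x}) ≠ 0 := by
    by_contra! h
    refine p.one_ne_zero ?_
    simpa [ν, hR0] using (hνc R hR).trans (iInt_eq_zero_iff.2 h)
  have hZR : R ∩ {x | t < c x} ∩ R = R ∩ {x | t < c x} := by rw [inter_right_comm, inter_self]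
  refine hZ (hRnull _ (hR.inter (hc t)) inter_subset_left (hp.of_op_le ht0 ?_))
  calc p.op t (τ (R ∩ {x | t < c x})) = p.op t (τ (R ∩ {x | t < c x} ∩ {x | t < c x})) := by
        rw [inter_assoc, inter_self]
    _ ≤ iInt p τ c (R ∩ {x | t < c x}) := op_le_iInt ht
    _ = p.one := by simpa [ν, hZR, hZ] using (hνc _ (hR.inter (hc t))).symm

theorem sigmaOdotFinite_of_rnProperty (hp : OdotFinite p p.one) (hτ : SigmaMaxitive τ)
    (hRN : RNProperty p τ) (hpr : SigmaPrincipal τ) : SigmaOdotFinite p τ := by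
  set I := {B | MeasurableSet B ∧ ∃ F : Set (Set E), F.Countable ∧
    (∀ A ∈ F, MeasurableSet A ∧ OdotFinite p (τ A)) ∧ B ⊆ ⋃₀ F}
  have hI : SigmaIdeal I := by
    refine ⟨⟨∅, .empty, ∅, countable_empty, by simp, empty_subset _⟩, fun S hS => hS.1,
      fun f hf => ?_, fun B S hB ⟨_, F, hF⟩ hBS => ⟨hB, F, hF.1, hF.2.1, hBS.trans hF.2.2⟩⟩
    choose hmeas F hF using hf
    refine ⟨.iUnion hmeas, ⋃ n, F n, countable_iUnion fun n => (hF n).1,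
      fun A hA => ?_, iUnion_subset fun n => (hF n).2.2.trans (sUnion_mono (subset_iUnion F n))⟩
    obtain ⟨n, hn⟩ := mem_iUnion.1 hA
    exact (hF n).2.1 A hn
  obtain ⟨L, ⟨-, F, hFc, hF, hLF⟩, hLmax⟩ := hpr I hI
  have hR : MeasurableSet (⋃₀ F)ᶜ := (MeasurableSet.sUnion hFc fun A hA => (hF A hA).1).compl
  have hR0 : τ (⋃₀ F)ᶜ = 0 := by
    refine measure_eq_zero_of_forall_odotFinite_null hp hτ hRN hR fun S hS hSR hSfin => ?_
    have hSI : S ∈ I := ⟨hS, {S}, countable_singleton S, by simpa using ⟨hS, hSfin⟩, by simp⟩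
    exact ((hLmax S hSI).mono fun x hx => ⟨hx, fun hxL => hSR hx (hLF hxL)⟩).measure_eq_zero
      hτ.1 hS
  obtain ⟨f, hf⟩ := (hFc.insert (⋃₀ F)ᶜ).exists_eq_range (insert_nonempty _ _)
  have hmem : ∀ n, f n = (⋃₀ F)ᶜ ∨ f n ∈ F := fun n => by
    simpa [← hf] using mem_range_self (f := f) n
  refine ⟨f, fun n => ?_, ?_, fun n => ?_⟩
  · rcases hmem n with h | h
    exacts [h ▸ hR, (hF _ h).1]
  · rw [← sUnion_range, ← hf, sUnion_insert, compl_union_self]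
  · rcases hmem n with h | h
    exacts [h ▸ hR0 ▸ OdotFinite.zero p, (hF _ h).2]

end Necessity

/-- For a non-degenerate pseudo-multiplication `⊙`, a σ-maxitive measure has the
Radon–Nikodym property with respect to the idempotent `⊙`-integral iff it is
σ-`⊙`-finite and σ-principal. -/
theorem rnProperty_iff_sigmaOdotFinite_and_sigmaPrincipal [MeasurableSpace E]
    (p : PseudoMul) (hp : OdotFinite p p.one)
    (τ : Set E → ℝ≥0∞) (hτ : SigmaMaxitive τ) :
    RNProperty p τ ↔ SigmaOdotFinite p τ ∧ SigmaPrincipal τ := by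
  refine ⟨fun hRN => ?_, fun ⟨hfin, hpr⟩ =>
    rnProperty_of_sigmaOdotFinite_of_sigmaPrincipal hτ hfin hpr⟩
  have hpr : SigmaPrincipal τ :=
    (countableChainCondition_of_rnProperty hτ hRN).sigmaPrincipal hτ.1
  exact ⟨sigmaOdotFinite_of_rnProperty hp hτ hRN hpr, hpr⟩
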